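/- Let A ∈ M_d(ℤ) ∩ GL_d(ℝ) be a hyperbolic integer matrix with stable subspace E^s(A) = {v ∈ ℝ^d : A^k v → 0 as k → +∞}, and let λ ∈ (0,1) and C₁ > 0 be constants such that ‖A^m v‖ ≤ C₁ λ^m ‖v‖ for every v ∈ E^s(A) and every m ≥ 0. Let F : ℝ^d → ℝ^d be a bijection that is a lift of a torus map with linearization A, and let H : ℝ^d → ℝ^d satisfy A ∘ H = H ∘ F and sup_{x∈ℝ^d} ‖H(x) − x‖ ≤ C₀ < ∞. Then for every m ≥ 1, every x ∈ ℝ^d, and every n ∈ ℤ^d with A^{-i} n ∈ ℤ^d for all 1 ≤ i ≤ m, one has ‖H(x + n) − H(x) − n‖ ≤ 2C₀C₁ · λ^m. -/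

import Mathlib

/-- A vector of integers viewed as a point of `ℝ^d`. -/
noncomputable def intVec {d : ℕ} (n : Fin d → ℤ) : EuclideanSpace ℝ (Fin d) :=
  WithLp.toLp 2 (fun i => (n i : ℝ))

/-- Matrix-vector multiplication, viewed as a map of `ℝ^d = EuclideanSpace ℝ (Fin d)`. -/
noncomputable def mulVecE {d : ℕ} (A : Matrix (Fin d) (Fin d) ℝ)
    (x : EuclideanSpace ℝ (Fin d)) : EuclideanSpace ℝ (Fin d) :=
  WithLp.toLp 2 (A.mulVec x)

/-! The displacement `D_p y = H (y + p) - H y - p` is bounded by `2 C₀` and satisfies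
`A (D_p y) = D_{A p} (F y)`. Writing `n = A^m n'` and `x = F^m y`, the vector
`H (x + n) - H x - n` is `A^m v` for `v = D_{n'} y`, whose whole forward orbit is bounded by `2 C₀`.
A bounded forward orbit of a hyperbolic matrix lies in the stable subspace: split the
characteristic polynomial into factors `X - a`; at an unstable root `a`, the remaining factor turns
`v` into an `a`-eigenvector with bounded orbit, hence zero, and at a stable root the orbit obeys
`w (k + 1) = a • w k + g k` with `g` a null sequence by induction on the number of factors. So
`‖A^m v‖ ≤ C₁ λ^m ‖v‖ ≤ 2 C₀ C₁ λ^m`. -/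

open Polynomial Filter Topology
open scoped Matrix

section Hyperbolic

variable {𝕜 E : Type*} [NontriviallyNormedField 𝕜] [NormedAddCommGroup E] [NormedSpace 𝕜 E]

lemma tendsto_zero_of_le_mul_add {a b : ℕ → ℝ} {c : ℝ} (ha : ∀ k, 0 ≤ a k) (hc₀ : 0 ≤ c)
    (hc₁ : c < 1) (hab : ∀ k, a (k + 1) ≤ c * a k + b k) (hb : Tendsto b atTop (𝓝 0)) :
    Tendsto a atTop (𝓝 0) := by
  refine tendsto_order.2 ⟨fun x hx => .of_forall fun k => hx.trans_le (ha k), fun ε hε => ?_⟩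
  obtain ⟨K, hK⟩ := eventually_atTop.1
    (hb.eventually (gt_mem_nhds (mul_pos (sub_pos.2 hc₁) (half_pos hε))))
  have key : ∀ j, a (K + j) ≤ c ^ j * a K + ε / 2 := by
    intro j
    induction j with
    | zero => simp only [add_zero, pow_zero, one_mul]; linarith
    | succ j ih =>
      calc a (K + (j + 1)) ≤ c * a (K + j) + b (K + j) := hab _
        _ ≤ c * (c ^ j * a K + ε / 2) + (1 - c) * (ε / 2) := by
          gcongr; exact (hK _ (Nat.le_add_right K j)).le
        _ = c ^ (j + 1) * a K + ε / 2 := by ring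
  have hgeo : Tendsto (fun j => c ^ j * a K) atTop (𝓝 0) := by
    simpa using (tendsto_pow_atTop_nhds_zero_of_lt_one hc₀ hc₁).mul_const (a K)
  obtain ⟨J, hJ⟩ := eventually_atTop.1 (hgeo.eventually (gt_mem_nhds (half_pos hε)))
  filter_upwards [eventually_ge_atTop (K + J)] with k hk
  obtain ⟨j, rfl⟩ := Nat.exists_eq_add_of_le (le_trans (Nat.le_add_right K J) hk)
  linarith [key j, hJ j (by omega)]

lemma tendsto_zero_of_eq_smul_add {w g : ℕ → E} {μ : 𝕜} (hμ : ‖μ‖ < 1)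
    (hw : ∀ k, w (k + 1) = μ • w k + g k) (hg : Tendsto g atTop (𝓝 0)) :
    Tendsto w atTop (𝓝 0) := by
  rw [tendsto_zero_iff_norm_tendsto_zero] at hg ⊢
  refine tendsto_zero_of_le_mul_add (fun k => norm_nonneg _) (norm_nonneg μ) hμ (fun k => ?_) hg
  rw [hw, ← norm_smul]
  exact norm_add_le _ _

lemma eq_zero_of_apply_eq_smul_of_bounded {f : E →L[𝕜] E} {μ : 𝕜} (hμ : 1 < ‖μ‖) {u : E}
    (hu : f u = μ • u) {B : ℝ} (hB : ∀ k, ‖(f ^ k) u‖ ≤ B) : u = 0 := by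
  have hpow : ∀ k, (f ^ k) u = μ ^ k • u := by
    intro k
    induction k with
    | zero => simp
    | succ k ih => rw [pow_succ', mul_apply_eq_comp, ih, map_smul, hu, smul_smul, pow_succ]
  by_contra hu₀
  have hu_pos : 0 < ‖u‖ := norm_pos_iff.2 hu₀
  obtain ⟨k, hk⟩ := pow_unbounded_of_one_lt (B / ‖u‖) hμ
  have := hB k
  rw [hpow, norm_smul, norm_pow] at this
  rw [div_lt_iff₀ hu_pos] at hk
  linarith

lemma norm_pow_aeval_apply_le (f : E →L[𝕜] E) (p : 𝕜[X]) {w : E} {B : ℝ}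
    (hB : ∀ k, ‖(f ^ k) w‖ ≤ B) (k : ℕ) : ‖(f ^ k) (aeval f p w)‖ ≤ ‖aeval f p‖ * B := by
  have hcomm : f ^ k * aeval f p = aeval f p * f ^ k := by
    simpa using ((Commute.all (X ^ k) p).map (aeval f)).eq
  rw [← mul_apply_eq_comp, hcomm, mul_apply_eq_comp]
  exact (ContinuousLinearMap.le_opNorm _ _).trans (by gcongr; exact hB k)

lemma tendsto_pow_apply_of_aeval_prod_eq_zero (f : E →L[𝕜] E) (s : Multiset 𝕜)
    (hs : ∀ a ∈ s, ‖a‖ ≠ 1) (w : E) (hw : aeval f (s.map fun a => X - C a).prod w = 0)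
    (B : ℝ) (hB : ∀ k, ‖(f ^ k) w‖ ≤ B) : Tendsto (fun k => (f ^ k) w) atTop (𝓝 0) := by
  induction s using Multiset.induction generalizing w B with
  | empty => simp_all
  | cons a s ih =>
    set P := (s.map fun a => X - C a).prod
    have hs' : ∀ b ∈ s, ‖b‖ ≠ 1 := fun b hb => hs b (Multiset.mem_cons_of_mem hb)
    have hfa : ∀ x, aeval f (X - C a) x = f x - a • x := fun x => by simp
    rw [Multiset.map_cons, Multiset.prod_cons] at hw
    rcases (hs a (Multiset.mem_cons_self a s)).lt_or_gt with ha | ha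
    · have hPu : aeval f P (aeval f (X - C a) w) = 0 := by
        rw [← mul_apply_eq_comp, ← map_mul, mul_comm]; exact hw
      refine tendsto_zero_of_eq_smul_add ha (fun k => ?_)
        (ih hs' _ hPu _ (norm_pow_aeval_apply_le f _ hB))
      rw [hfa, pow_succ, mul_apply_eq_comp, map_sub, map_smul]
      abel
    · refine ih hs' w ?_ B hB
      refine eq_zero_of_apply_eq_smul_of_bounded ha ?_ (norm_pow_aeval_apply_le f P hB)
      rw [← sub_eq_zero, ← hfa, ← mul_apply_eq_comp, ← map_mul]
      exact hw

lemma tendsto_pow_apply_of_aeval_eq_zero [IsAlgClosed 𝕜] (f : E →L[𝕜] E) {q : 𝕜[X]} (hq : q.Monic)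
    (hroots : ∀ μ, q.IsRoot μ → ‖μ‖ ≠ 1) (w : E) (hw : aeval f q w = 0) (B : ℝ)
    (hB : ∀ k, ‖(f ^ k) w‖ ≤ B) : Tendsto (fun k => (f ^ k) w) atTop (𝓝 0) := by
  rw [(IsAlgClosed.splits q).eq_prod_roots_of_monic hq] at hw
  exact tendsto_pow_apply_of_aeval_prod_eq_zero f q.roots
    (fun a ha => hroots a ((mem_roots hq.ne_zero).1 ha)) w hw B hB

end Hyperbolic

lemma tendsto_toEuclideanCLM_pow_apply {n : Type*} [Fintype n] [DecidableEq n]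
    (M : Matrix n n ℂ) (hM : ∀ μ, M.charpoly.IsRoot μ → ‖μ‖ ≠ 1) (w : EuclideanSpace ℂ n)
    (B : ℝ) (hB : ∀ k, ‖(Matrix.toEuclideanCLM (n := n) (𝕜 := ℂ) M ^ k) w‖ ≤ B) :
    Tendsto (fun k => (Matrix.toEuclideanCLM (n := n) (𝕜 := ℂ) M ^ k) w) atTop (𝓝 0) := by
  refine tendsto_pow_apply_of_aeval_eq_zero _ M.charpoly_monic hM w ?_ B hB
  rw [aeval_algHom_apply, Matrix.aeval_self_charpoly, map_zero, zero_apply]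

noncomputable def complexify {n : Type*} (v : EuclideanSpace ℝ n) : EuclideanSpace ℂ n :=
  WithLp.toLp 2 fun i => (v i : ℂ)

lemma norm_complexify {n : Type*} [Fintype n] (v : EuclideanSpace ℝ n) :
    ‖complexify v‖ = ‖v‖ := by
  simp [complexify, EuclideanSpace.norm_eq]

lemma complexify_mulVecE {d : ℕ} (M : Matrix (Fin d) (Fin d) ℝ) (v : EuclideanSpace ℝ (Fin d)) :
    complexify (mulVecE M v) =
      Matrix.toEuclideanCLM (n := Fin d) (𝕜 := ℂ) (M.map (↑)) (complexify v) := by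
  ext i
  exact RingHom.map_mulVec Complex.ofRealHom M v i

lemma tendsto_mulVecE_pow_of_bounded {d : ℕ} (M : Matrix (Fin d) (Fin d) ℝ)
    (hM : ∀ μ : ℂ, (M.map (↑)).charpoly.IsRoot μ → ‖μ‖ ≠ 1) (v : EuclideanSpace ℝ (Fin d))
    (B : ℝ) (hB : ∀ k, ‖mulVecE (M ^ k) v‖ ≤ B) :
    Tendsto (fun k => mulVecE (M ^ k) v) atTop (𝓝 0) := by
  have hpow : ∀ k, complexify (mulVecE (M ^ k) v) =
      (Matrix.toEuclideanCLM (n := Fin d) (𝕜 := ℂ) (M.map (↑)) ^ k) (complexify v) := by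
    intro k
    rw [complexify_mulVecE, ← map_pow]
    congr 2
    exact Matrix.map_pow M Complex.ofRealHom k
  have h := tendsto_toEuclideanCLM_pow_apply _ hM (complexify v) B
    (fun k => by rw [← hpow, norm_complexify]; exact hB k)
  rw [tendsto_zero_iff_norm_tendsto_zero] at h ⊢
  simpa only [← hpow, norm_complexify] using h

section Displacement

variable {d : ℕ}

lemma mulVecE_eq_toEuclideanCLM (M : Matrix (Fin d) (Fin d) ℝ) (x : EuclideanSpace ℝ (Fin d)) :
    mulVecE M x = Matrix.toEuclideanCLM (n := Fin d) (𝕜 := ℝ) M x :=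
  rfl

lemma mulVecE_mul (M N : Matrix (Fin d) (Fin d) ℝ) (x : EuclideanSpace ℝ (Fin d)) :
    mulVecE (M * N) x = mulVecE M (mulVecE N x) := by
  simp only [mulVecE, Matrix.mulVec_mulVec]

lemma mulVecE_intVec (B : Matrix (Fin d) (Fin d) ℤ) (p : Fin d → ℤ) :
    mulVecE (B.map (↑)) (intVec p) = intVec (B *ᵥ p) := by
  ext i
  exact (RingHom.map_mulVec (Int.castRingHom ℝ) B p i).symm

noncomputable def displacement (H : EuclideanSpace ℝ (Fin d) → EuclideanSpace ℝ (Fin d))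
    (p : Fin d → ℤ) (y : EuclideanSpace ℝ (Fin d)) : EuclideanSpace ℝ (Fin d) :=
  H (y + intVec p) - H y - intVec p

variable {A : Matrix (Fin d) (Fin d) ℤ} {F H : EuclideanSpace ℝ (Fin d) → EuclideanSpace ℝ (Fin d)}

lemma norm_displacement_le {C₀ : ℝ} (hC₀ : ∀ x, ‖H x - x‖ ≤ C₀) (p : Fin d → ℤ)
    (y : EuclideanSpace ℝ (Fin d)) : ‖displacement H p y‖ ≤ 2 * C₀ := by
  have h : displacement H p y = (H (y + intVec p) - (y + intVec p)) - (H y - y) := by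
    unfold displacement; abel
  rw [h, two_mul]
  exact (norm_sub_le _ _).trans (add_le_add (hC₀ _) (hC₀ _))

lemma mulVecE_displacement
    (hlift : ∀ x n, F (x + intVec n) = F x + mulVecE (A.map (↑)) (intVec n))
    (hconj : ∀ x, mulVecE (A.map (↑)) (H x) = H (F x)) (p : Fin d → ℤ)
    (y : EuclideanSpace ℝ (Fin d)) :
    mulVecE (A.map (↑)) (displacement H p y) = displacement H (A *ᵥ p) (F y) := by
  simp only [displacement, mulVecE_eq_toEuclideanCLM, map_sub]
  simp only [← mulVecE_eq_toEuclideanCLM, hconj, hlift, mulVecE_intVec]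

lemma mulVecE_pow_displacement
    (hlift : ∀ x n, F (x + intVec n) = F x + mulVecE (A.map (↑)) (intVec n))
    (hconj : ∀ x, mulVecE (A.map (↑)) (H x) = H (F x)) (k : ℕ) (p : Fin d → ℤ)
    (y : EuclideanSpace ℝ (Fin d)) :
    mulVecE (A.map (↑) ^ k) (displacement H p y) = displacement H ((A ^ k) *ᵥ p) (F^[k] y) := by
  induction k with
  | zero => simp [mulVecE_eq_toEuclideanCLM]
  | succ k ih =>
    rw [pow_succ', mulVecE_mul, ih, mulVecE_displacement hlift hconj, Matrix.mulVec_mulVec,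
      ← pow_succ', Function.iterate_succ_apply']

end Displacement

theorem stmt6_general (d : ℕ) (A : Matrix (Fin d) (Fin d) ℤ)
    (hhyp : ∀ μ : ℂ, (Matrix.charpoly (A.map ((↑) : ℤ → ℂ))).IsRoot μ → ‖μ‖ ≠ 1)
    (lam C₁ : ℝ) (hlam : 0 < lam ∧ lam < 1) (hC₁ : 0 < C₁)
    (hstab : ∀ v : EuclideanSpace ℝ (Fin d),
      Filter.Tendsto (fun k : ℕ => mulVecE ((A.map ((↑) : ℤ → ℝ)) ^ k) v)
        Filter.atTop (nhds 0) →
      ∀ m : ℕ, ‖mulVecE ((A.map ((↑) : ℤ → ℝ)) ^ m) v‖ ≤ C₁ * lam ^ m * ‖v‖)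
    (F H : EuclideanSpace ℝ (Fin d) → EuclideanSpace ℝ (Fin d))
    (hFbij : Function.Bijective F)
    (hlift : ∀ (x : EuclideanSpace ℝ (Fin d)) (n : Fin d → ℤ),
      F (x + intVec n) = F x + mulVecE (A.map ((↑) : ℤ → ℝ)) (intVec n))
    (hconj : ∀ x : EuclideanSpace ℝ (Fin d),
      mulVecE (A.map ((↑) : ℤ → ℝ)) (H x) = H (F x))
    (C₀ : ℝ) (hC₀ : ∀ x : EuclideanSpace ℝ (Fin d), ‖H x - x‖ ≤ C₀) :
    ∀ m : ℕ, 1 ≤ m → ∀ (x : EuclideanSpace ℝ (Fin d)) (n : Fin d → ℤ),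
      (∀ i : ℕ, 1 ≤ i → i ≤ m → ∃ n' : Fin d → ℤ, (A ^ i).mulVec n' = n) →
      ‖H (x + intVec n) - H x - intVec n‖ ≤ 2 * C₀ * C₁ * lam ^ m := by
  intro m hm x n hn
  obtain ⟨n', rfl⟩ := hn m hm le_rfl
  obtain ⟨y, rfl⟩ := hFbij.surjective.iterate m x
  set v := displacement H n' y
  have hhyp' : ∀ μ : ℂ, ((A.map ((↑) : ℤ → ℝ)).map (↑)).charpoly.IsRoot μ → ‖μ‖ ≠ 1 := by
    simpa [Matrix.map_map, Function.comp_def] using hhyp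
  have hv : Tendsto (fun k => mulVecE (A.map ((↑) : ℤ → ℝ) ^ k) v) atTop (𝓝 0) :=
    tendsto_mulVecE_pow_of_bounded _ hhyp' v (2 * C₀) fun k => by
      rw [mulVecE_pow_displacement hlift hconj]; exact norm_displacement_le hC₀ _ _
  calc ‖H (F^[m] y + intVec ((A ^ m) *ᵥ n')) - H (F^[m] y) - intVec ((A ^ m) *ᵥ n')‖
      = ‖mulVecE (A.map ((↑) : ℤ → ℝ) ^ m) v‖ := by rw [mulVecE_pow_displacement hlift hconj]; rfl
    _ ≤ C₁ * lam ^ m * ‖v‖ := hstab v hv m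
    _ ≤ C₁ * lam ^ m * (2 * C₀) := by
      have hlam_pow := pow_pos hlam.1 m
      gcongr
      exact norm_displacement_le hC₀ n' y
    _ = 2 * C₀ * C₁ * lam ^ m := by ring

/-- Let `A ∈ M_d(ℤ) ∩ GL_d(ℝ)` be hyperbolic with stable subspace
`E^s(A) = {v : A^k v → 0}` and constants `λ ∈ (0,1)`, `C₁ > 0` with
`‖A^m v‖ ≤ C₁ λ^m ‖v‖` for `v ∈ E^s(A)`. Let `F` be a bijective lift of a torus map with
linearization `A` and `H` satisfy `A ∘ H = H ∘ F`, `‖H - id‖ ≤ C₀`. Then for every `m ≥ 1`,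
every `x`, and every `n ∈ ℤ^d` with `A^(-i) n ∈ ℤ^d` for all `1 ≤ i ≤ m`,
`‖H(x+n) - H(x) - n‖ ≤ 2 C₀ C₁ λ^m`. -/
theorem stmt6 (d : ℕ) (A : Matrix (Fin d) (Fin d) ℤ)
    (hdet : (A.map ((↑) : ℤ → ℝ)).det ≠ 0)
    (hhyp : ∀ μ : ℂ, (Matrix.charpoly (A.map ((↑) : ℤ → ℂ))).IsRoot μ → ‖μ‖ ≠ 1)
    (lam C₁ : ℝ) (hlam : 0 < lam ∧ lam < 1) (hC₁ : 0 < C₁)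
    (hstab : ∀ v : EuclideanSpace ℝ (Fin d),
      Filter.Tendsto (fun k : ℕ => mulVecE ((A.map ((↑) : ℤ → ℝ)) ^ k) v)
        Filter.atTop (nhds 0) →
      ∀ m : ℕ, ‖mulVecE ((A.map ((↑) : ℤ → ℝ)) ^ m) v‖ ≤ C₁ * lam ^ m * ‖v‖)
    (F H : EuclideanSpace ℝ (Fin d) → EuclideanSpace ℝ (Fin d))
    (hFbij : Function.Bijective F)
    (hlift : ∀ (x : EuclideanSpace ℝ (Fin d)) (n : Fin d → ℤ),
      F (x + intVec n) = F x + mulVecE (A.map ((↑) : ℤ → ℝ)) (intVec n))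
    (hconj : ∀ x : EuclideanSpace ℝ (Fin d),
      mulVecE (A.map ((↑) : ℤ → ℝ)) (H x) = H (F x))
    (C₀ : ℝ) (hC₀ : ∀ x : EuclideanSpace ℝ (Fin d), ‖H x - x‖ ≤ C₀) :
    ∀ m : ℕ, 1 ≤ m → ∀ (x : EuclideanSpace ℝ (Fin d)) (n : Fin d → ℤ),
      (∀ i : ℕ, 1 ≤ i → i ≤ m → ∃ n' : Fin d → ℤ, (A ^ i).mulVec n' = n) →
      ‖H (x + intVec n) - H x - intVec n‖ ≤ 2 * C₀ * C₁ * lam ^ m :=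
  stmt6_general d A hhyp lam C₁ hlam hC₁ hstab F H hFbij hlift hconj C₀ hC₀
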